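/- arXiv:2011.07471 — 2 statements merged into one kernel-verified Lean document; each statement's English description precedes it below -/
import Mathlib

section
/- Let F be a monotone function on frequency vectors (F(x) ≤ F(y) whenever x ⪯ y coordinatewise), with nonnegative values. Let u, v₁, …, v_k be nonnegative vectors, and suppose for each i ∈ {1,…,k} there are parameters γ_i, ε_i > 0 with F(u+v₁+⋯+v_i) − F(u+v₁+⋯+v_{i−1}) ≤ γ_i · F(u+v₁+⋯+v_{i−1}) and ∏_{i=1}^k (1+γ_i) ≤ 2 and Σ_{i=1}^k ε_i ≤ ε/4. Suppose A₀ is a real number with |A₀ − F(u)| ≤ (ε/2)·F(u), and for each i, D_i is a real number with |D_i − (F(u+v₁+⋯+v_i) − F(u+v₁+⋯+v_{i−1}))| ≤ ε_i · F(u+v₁+⋯+v_{i−1}). Then |A₀ + Σ_{i=1}^k D_i − F(u+v₁+⋯+v_k)| ≤ ε · F(u+v₁+⋯+v_k). -/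
/-!
Write `g i` for the value of `F` after the first `i` vectors of the chain. The error of the
stitched estimate splits as `(A - g 0) + ∑ (D i - (g i - g (i - 1)))`, since the true
increments telescope to `g k - g 0`. Each error is bounded by a multiple of some `g j` with
`j ≤ k`, and monotonicity of `F` along the chain of nonnegative vectors gives `g j ≤ g k`,
so the total error is at most `(ε / 2 + ∑ εᵢ) · g k ≤ ε · g k`.
-/

open Finset

theorem Finset.sum_Icc_one_sub_pred {G : Type*} [AddCommGroup G] (f : ℕ → G) (k : ℕ) :
    ∑ i ∈ Icc 1 k, (f i - f (i - 1)) = f k - f 0 := by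
  induction k with
  | zero => simp
  | succ k ih =>
    rw [sum_Icc_succ_top (by omega), ih, Nat.add_sub_cancel]
    abel

theorem monotone_add_sum_Icc_of_nonneg {M : Type*} [AddCommMonoid M] [PartialOrder M]
    [IsOrderedAddMonoid M] (u : M) {v : ℕ → M} (hv : ∀ i, 0 ≤ v i) :
    Monotone fun i => u + ∑ t ∈ Icc 1 i, v t := fun _ _ hab =>
  add_le_add_right (sum_le_sum_of_subset_of_nonneg (Icc_subset_Icc_right hab)
    fun t _ _ => hv t) u

theorem abs_add_sum_sub_le_of_monotone {R : Type*} [CommRing R] [LinearOrder R]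
    [IsStrictOrderedRing R] {g : ℕ → R} (hg : Monotone g) (k : ℕ) {a A : R} {e D : ℕ → R}
    (ha : 0 ≤ a) (he : ∀ i ∈ Icc 1 k, 0 ≤ e i) (hA : |A - g 0| ≤ a * g 0)
    (hD : ∀ i ∈ Icc 1 k, |D i - (g i - g (i - 1))| ≤ e i * g (i - 1)) :
    |A + ∑ i ∈ Icc 1 k, D i - g k| ≤ (a + ∑ i ∈ Icc 1 k, e i) * g k := by
  have hsplit : A + ∑ i ∈ Icc 1 k, D i - g k
      = (A - g 0) + ∑ i ∈ Icc 1 k, (D i - (g i - g (i - 1))) := by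
    rw [sum_sub_distrib, sum_Icc_one_sub_pred]
    abel
  have hD' : ∀ i ∈ Icc 1 k, |D i - (g i - g (i - 1))| ≤ e i * g k := fun i hi =>
    (hD i hi).trans <| mul_le_mul_of_nonneg_left (hg (by grind)) (he i hi)
  calc |A + ∑ i ∈ Icc 1 k, D i - g k|
      ≤ |A - g 0| + ∑ i ∈ Icc 1 k, |D i - (g i - g (i - 1))| := by
        rw [hsplit]
        exact (abs_add_le _ _).trans (add_le_add_right (abs_sum_le_sum_abs _ _) _)
    _ ≤ a * g k + ∑ i ∈ Icc 1 k, e i * g k :=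
        add_le_add (hA.trans (mul_le_mul_of_nonneg_left (hg k.zero_le) ha)) (sum_le_sum hD')
    _ = (a + ∑ i ∈ Icc 1 k, e i) * g k := by rw [add_mul, sum_mul]

theorem sketch_stitching_general (n : ℕ) (F : (Fin n → ℝ) → ℝ)
    (hmono : ∀ x y : Fin n → ℝ, (∀ j, x j ≤ y j) → F x ≤ F y)
    (hnonneg : ∀ x, 0 ≤ F x)
    (k : ℕ) (u : Fin n → ℝ) (v : ℕ → Fin n → ℝ)
    (hv : ∀ i j, 0 ≤ v i j)
    (εi : ℕ → ℝ) (ε : ℝ)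
    (hεipos : ∀ i ∈ Finset.Icc 1 k, 0 < εi i)
    (hsum : ∑ i ∈ Finset.Icc 1 k, εi i ≤ ε / 4)
    (A : ℝ) (hA : |A - F u| ≤ ε / 2 * F u)
    (D : ℕ → ℝ)
    (hD : ∀ i ∈ Finset.Icc 1 k,
      |D i - (F (u + ∑ t ∈ Finset.Icc 1 i, v t)
              - F (u + ∑ t ∈ Finset.Icc 1 (i - 1), v t))|
        ≤ εi i * F (u + ∑ t ∈ Finset.Icc 1 (i - 1), v t)) :
    |A + (∑ i ∈ Finset.Icc 1 k, D i) - F (u + ∑ t ∈ Finset.Icc 1 k, v t)|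
      ≤ ε * F (u + ∑ t ∈ Finset.Icc 1 k, v t) := by
  have hεi : ∀ i ∈ Icc 1 k, 0 ≤ εi i := fun i hi => (hεipos i hi).le
  have hsum_nonneg : 0 ≤ ∑ i ∈ Icc 1 k, εi i := sum_nonneg hεi
  have hF : Monotone F := fun x y hxy => hmono x y hxy
  have hchain : Monotone fun i => F (u + ∑ t ∈ Icc 1 i, v t) :=
    hF.comp (monotone_add_sum_Icc_of_nonneg u fun i j => hv i j)
  have hstitch := abs_add_sum_sub_le_of_monotone hchain k (a := ε / 2) (by linarith) hεi
    (by simpa using hA) hD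
  refine hstitch.trans (mul_le_mul_of_nonneg_right ?_ (hnonneg _))
  linarith

theorem sketch_stitching (n : ℕ) (F : (Fin n → ℝ) → ℝ)
    (hmono : ∀ x y : Fin n → ℝ, (∀ j, x j ≤ y j) → F x ≤ F y)
    (hnonneg : ∀ x, 0 ≤ F x)
    (k : ℕ) (u : Fin n → ℝ) (v : ℕ → Fin n → ℝ)
    (hu : ∀ j, 0 ≤ u j) (hv : ∀ i j, 0 ≤ v i j)
    (γ εi : ℕ → ℝ) (ε : ℝ) (hε : 0 < ε)
    (hγpos : ∀ i ∈ Finset.Icc 1 k, 0 < γ i)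
    (hεipos : ∀ i ∈ Finset.Icc 1 k, 0 < εi i)
    (hdiff : ∀ i ∈ Finset.Icc 1 k,
      F (u + ∑ t ∈ Finset.Icc 1 i, v t) - F (u + ∑ t ∈ Finset.Icc 1 (i - 1), v t)
        ≤ γ i * F (u + ∑ t ∈ Finset.Icc 1 (i - 1), v t))
    (hprod : ∏ i ∈ Finset.Icc 1 k, (1 + γ i) ≤ 2)
    (hsum : ∑ i ∈ Finset.Icc 1 k, εi i ≤ ε / 4)
    (A : ℝ) (hA : |A - F u| ≤ ε / 2 * F u)
    (D : ℕ → ℝ)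
    (hD : ∀ i ∈ Finset.Icc 1 k,
      |D i - (F (u + ∑ t ∈ Finset.Icc 1 i, v t)
              - F (u + ∑ t ∈ Finset.Icc 1 (i - 1), v t))|
        ≤ εi i * F (u + ∑ t ∈ Finset.Icc 1 (i - 1), v t)) :
    |A + (∑ i ∈ Finset.Icc 1 k, D i) - F (u + ∑ t ∈ Finset.Icc 1 k, v t)|
      ≤ ε * F (u + ∑ t ∈ Finset.Icc 1 k, v t) :=
  sketch_stitching_general n F hmono hnonneg k u v hv εi ε hεipos hsum A hA D hD
end

section
/- For 0 < p ≤ 1 and 0 < ε < 1, the function F_p(x) = Σ_i |x_i|^p on nonnegative vectors is (ε, ε)-smooth: for nonnegative vectors a, b, c ∈ ℝⁿ, if F_p(b) ≥ (1 − ε)·F_p(a+b), then F_p(b+c) ≥ (1 − ε)·F_p(a+b+c). -/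
/-!
For `0 ≤ p ≤ 1` the map `t ↦ t ^ p` is concave on `[0, ∞)`, so its increments `(t + a) ^ p - t ^ p`
decrease in `t`. Comparing the increments at `b i` and at `b i + c i` and summing gives
`F(a + b + c) + F(b) ≤ F(a + b) + F(b + c)` for `F = ∑ i, (· i) ^ p`. Multiplied by `1 - ε`, the
hypothesis absorbs `(1 - ε) F(a + b)`, and what is left, `F(b) + (1 - ε) (F(b + c) - F(b))`, is at
most `F(b + c)` because `F` is monotone.
-/

lemma ConcaveOn.map_add_sub_map_le_of_le {𝕜 : Type*} [Field 𝕜] [LinearOrder 𝕜]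
    [IsStrictOrderedRing 𝕜] {s : Set 𝕜} {f : 𝕜 → 𝕜} (hf : ConcaveOn 𝕜 s f) {x y d : 𝕜}
    (hx : x ∈ s) (hyd : y + d ∈ s) (hxy : x ≤ y) (hd : 0 ≤ d) :
    f (y + d) - f y ≤ f (x + d) - f x := by
  rcases (add_le_add hxy hd).eq_or_lt with heq | hlt
  · obtain rfl : x = y := by linarith
    obtain rfl : d = 0 := by linarith
    simp
  have hL0 : 0 < y + d - x := by linarith
  have hu := div_nonneg (sub_nonneg.2 hxy) hL0.le
  have hv := div_nonneg hd hL0.le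
  have huv : (y - x) / (y + d - x) + d / (y + d - x) = 1 := by field_simp; ring
  -- `x + d` and `y` split the segment `[x, y + d]` in the ratios `d : (y - x)` and `(y - x) : d`.
  have hxd := hf.2 hx hyd hu hv huv
  have hy := hf.2 hx hyd hv hu (by rwa [add_comm])
  simp only [smul_eq_mul] at hxd hy
  rw [show (y - x) / (y + d - x) * x + d / (y + d - x) * (y + d) = x + d by
    field_simp; ring] at hxd
  rw [show d / (y + d - x) * x + (y - x) / (y + d - x) * (y + d) = y by
    field_simp; ring] at hy
  linear_combination hxd + hy - (f x + f (y + d)) * huv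

lemma Real.rpow_add_add_add_rpow_le {p x y z : ℝ} (hp0 : 0 ≤ p) (hp1 : p ≤ 1) (hx : 0 ≤ x)
    (hy : 0 ≤ y) (hz : 0 ≤ z) : (x + y + z) ^ p + y ^ p ≤ (x + y) ^ p + (y + z) ^ p := by
  have := (Real.concaveOn_rpow hp0 hp1).map_add_sub_map_le_of_le (d := x) hy
    (Set.mem_Ici.2 (by positivity)) (le_add_of_nonneg_right hz) hx
  rw [show y + z + x = x + y + z by ring, add_comm y x] at this
  linarith

lemma Real.sum_rpow_add_add_add_sum_rpow_le {ι : Type*} [Fintype ι] {p : ℝ} (hp0 : 0 ≤ p)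
    (hp1 : p ≤ 1) {a b c : ι → ℝ} (ha : ∀ i, 0 ≤ a i) (hb : ∀ i, 0 ≤ b i) (hc : ∀ i, 0 ≤ c i) :
    ∑ i, (a i + b i + c i) ^ p + ∑ i, b i ^ p ≤ ∑ i, (a i + b i) ^ p + ∑ i, (b i + c i) ^ p := by
  simp only [← Finset.sum_add_distrib]
  exact Finset.sum_le_sum fun i _ ↦ Real.rpow_add_add_add_rpow_le hp0 hp1 (ha i) (hb i) (hc i)

theorem Fp_smooth_of_le_one (n : ℕ) (p ε : ℝ) (hp0 : 0 < p) (hp1 : p ≤ 1)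
    (hε0 : 0 < ε) (hε1 : ε < 1)
    (a b c : Fin n → ℝ) (ha : ∀ i, 0 ≤ a i) (hb : ∀ i, 0 ≤ b i) (hc : ∀ i, 0 ≤ c i)
    (h : (1 - ε) * ∑ i, (a i + b i) ^ p ≤ ∑ i, (b i) ^ p) :
    (1 - ε) * ∑ i, (a i + b i + c i) ^ p ≤ ∑ i, (b i + c i) ^ p := by
  have hsub := Real.sum_rpow_add_add_add_sum_rpow_le hp0.le hp1 ha hb hc
  have hmono : ∑ i, b i ^ p ≤ ∑ i, (b i + c i) ^ p := Finset.sum_le_sum fun i _ ↦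
    Real.rpow_le_rpow (hb i) (le_add_of_nonneg_right (hc i)) hp0.le
  linarith [mul_le_mul_of_nonneg_left hsub (sub_nonneg.2 hε1.le),
    mul_nonneg hε0.le (sub_nonneg.2 hmono)]
end
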